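/- In the fair-division instance constructed from a Clique instance (G = (V,E), k) with ℓ = k(k−1)/2 and m = |E| ≥ ℓ — goods: ℓ popular goods, k specialized goods, ℓ+1 dummy goods; agents V ∪ E ∪ S ∪ W with S = {s_1,…,s_{ℓ+1}}, W = {w_{ij} : i ∈ [n], j ∈ [ℓ+1]}; graph H: each edge-agent e = (u,v) adjacent to all of S and to u and v, each vertex-agent v_i adjacent to all w_{ij}, and each {w_{i1},…,w_{i(ℓ+1)}} a clique; valuations: all agents value all popular goods, vertex-agents additionally value all specialized goods, s_i additionally values the dummy good d_i — every allocation π that is complete, non-wasteful, and graph-envy-free with respect to H assigns every popular good to an agent from E, and no agent of E receives more than one popular good under π. -/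

import Mathlib

namespace CliqueGoodsReduction

/-- Agents of the reduced instance: a vertex agent for each vertex of `G`, an
edge agent for each edge of `G`, the agents `s_1, …, s_{ℓ+1}` and the agents
`w_{ij}` for `i ∈ [n]`, `j ∈ [ℓ+1]`. -/
inductive Agent (n m ℓ : ℕ) where
  | vert (i : Fin n)
  | edg (t : Fin m)
  | sag (i : Fin (ℓ + 1))
  | wag (i : Fin n) (j : Fin (ℓ + 1))
deriving DecidableEq

/-- Goods of the reduced instance: `ℓ` popular goods, `k` specialized goods and
`ℓ + 1` dummy goods. -/
inductive Good (k ℓ : ℕ) where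
  | pop (i : Fin ℓ)
  | spec (i : Fin k)
  | dum (i : Fin (ℓ + 1))
deriving DecidableEq

/-- The social network `H`: each edge agent `e_t = (u,v)` is adjacent to all of
`S` and to the vertex agents `u` and `v`; each vertex agent `v_i` is adjacent
to all `w_{ij}`; and `{w_{i1}, …, w_{i(ℓ+1)}}` induces a clique for each `i`.
Here `ep t` gives the pair of endpoints of the edge `e_t`. -/
def H (n m ℓ : ℕ) (ep : Fin m → Fin n × Fin n) : SimpleGraph (Agent n m ℓ) :=
  SimpleGraph.fromRel (fun a b =>
    match a, b with
    | .edg _, .sag _ => True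
    | .edg t, .vert p => p = (ep t).1 ∨ p = (ep t).2
    | .vert i, .wag i' _ => i = i'
    | .wag i _, .wag i' _ => i = i'
    | _, _ => False)

/-- Additive 0/1 valuations: all agents value all popular goods; vertex agents
additionally value all specialized goods; `s_i` additionally values the dummy
good `d_i`; all other values are 0. -/
def val (n m k ℓ : ℕ) : Agent n m ℓ → Good k ℓ → ℕ
  | _, .pop _ => 1
  | .vert _, .spec _ => 1
  | .sag i, .dum j => if i = j then 1 else 0
  | _, _ => 0

/-- With `ℓ = C(k,2)` and `m ≥ ℓ`, every complete, non-wasteful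
allocation that is graph-envy-free w.r.t. `H` assigns every popular good to an
edge agent, and no edge agent receives more than one popular good. -/
theorem popular_goods_to_edge_agents
    (n m k ℓ : ℕ) (hℓ : ℓ = k.choose 2) (hm : ℓ ≤ m)
    (G : SimpleGraph (Fin n)) (ep : Fin m → Fin n × Fin n)
    (hep : ∀ t : Fin m, G.Adj (ep t).1 (ep t).2)
    (hsurj : ∀ x y : Fin n, G.Adj x y → ∃ t : Fin m, ep t = (x, y) ∨ ep t = (y, x))
    (hinj : ∀ t t' : Fin m,
      (ep t = ep t' ∨ ep t = ((ep t').2, (ep t').1)) → t = t')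
    (π : Agent n m ℓ → Finset (Good k ℓ))
    (hdisj : ∀ a b : Agent n m ℓ, a ≠ b → Disjoint (π a) (π b))
    (hcomplete : ∀ g : Good k ℓ, ∃ a : Agent n m ℓ, g ∈ π a)
    (hnonwasteful : ∀ a : Agent n m ℓ, ∀ g ∈ π a, val n m k ℓ a g = 1)
    (hgef : ∀ a b : Agent n m ℓ, (H n m ℓ ep).Adj a b →
      ∑ g ∈ π b, val n m k ℓ a g ≤ ∑ g ∈ π a, val n m k ℓ a g) :
    (∀ (i : Fin ℓ) (a : Agent n m ℓ),
        Good.pop i ∈ π a → ∃ t : Fin m, a = Agent.edg t) ∧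
    (∀ (t : Fin m) (i i' : Fin ℓ),
        Good.pop i ∈ π (Agent.edg t) → Good.pop i' ∈ π (Agent.edg t) → i = i') := by
  classical
  -- Pigeonhole: an injective family of agents each holding a popular good has ≤ ℓ members
  have pigeon : ∀ {α : Type} [Fintype α] (A : α → Agent n m ℓ),
      Function.Injective A → (∀ j, ∃ i : Fin ℓ, Good.pop i ∈ π (A j)) →
      Fintype.card α ≤ ℓ := by
    intro α _ A hA hP
    choose f hf using hP
    have hfinj : Function.Injective f := by
      intro j j' hjj
      by_contra hne
      have hne' : A j ≠ A j' := fun h => hne (hA h)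
      exact (Finset.disjoint_left.mp (hdisj (A j) (A j') hne') (hf j)) (hjj ▸ hf j')
    simpa using Fintype.card_le_of_injective f hfinj
  have val_pop : ∀ (a : Agent n m ℓ) (i : Fin ℓ), val n m k ℓ a (Good.pop i) = 1 := by
    intro a i; cases a <;> rfl
  have bundle_ge_of_pop : ∀ (a b : Agent n m ℓ) (i : Fin ℓ), Good.pop i ∈ π b →
      1 ≤ ∑ g ∈ π b, val n m k ℓ a g := by
    intro a b i hi
    calc 1 = val n m k ℓ a (Good.pop i) := (val_pop a i).symm
    _ ≤ _ := Finset.single_le_sum (fun g _ => Nat.zero_le _) hi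
  -- agents valuing only popular goods with positive bundle value hold a popular good
  have exists_pop_of_pos : ∀ (a : Agent n m ℓ),
      (∀ g : Good k ℓ, (∀ i : Fin ℓ, g ≠ Good.pop i) → val n m k ℓ a g = 0) →
      1 ≤ ∑ g ∈ π a, val n m k ℓ a g → ∃ i, Good.pop i ∈ π a := by
    intro a hz hsum
    by_contra h
    push_neg at h
    have hzero : ∑ g ∈ π a, val n m k ℓ a g = 0 := by
      refine Finset.sum_eq_zero (fun g hg => ?_)
      cases g with
      | pop i => exact absurd hg (h i)
      | spec i => exact hz _ (fun i => by simp)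
      | dum i => exact hz _ (fun i => by simp)
    omega
  have wag_zero : ∀ (v : Fin n) (j : Fin (ℓ+1)) (g : Good k ℓ),
      (∀ i : Fin ℓ, g ≠ Good.pop i) → val n m k ℓ (Agent.wag v j) g = 0 := by
    intro v j g hg
    cases g with
    | pop i => exact absurd rfl (hg i)
    | spec i => rfl
    | dum i => rfl
  have edg_zero : ∀ (t : Fin m) (g : Good k ℓ),
      (∀ i : Fin ℓ, g ≠ Good.pop i) → val n m k ℓ (Agent.edg t) g = 0 := by
    intro t g hg
    cases g with
    | pop i => exact absurd rfl (hg i)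
    | spec i => rfl
    | dum i => rfl
  -- adjacency facts
  have adjVW : ∀ (v : Fin n) (j : Fin (ℓ+1)),
      (H n m ℓ ep).Adj (Agent.vert v) (Agent.wag v j) := by
    intro v j
    exact ⟨by simp, Or.inl rfl⟩
  have adjWW : ∀ (v : Fin n) (j j' : Fin (ℓ+1)), j ≠ j' →
      (H n m ℓ ep).Adj (Agent.wag v j) (Agent.wag v j') := by
    intro v j j' hjj
    exact ⟨by simp [hjj], Or.inl rfl⟩
  have adjES : ∀ (t : Fin m) (j : Fin (ℓ+1)),
      (H n m ℓ ep).Adj (Agent.edg t) (Agent.sag j) := by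
    intro t j
    exact ⟨by simp, Or.inl trivial⟩
  constructor
  · -- every popular good goes to an edge agent
    intro i a hmem
    cases a with
    | edg t => exact ⟨t, rfl⟩
    | vert v =>
      exfalso
      have hw : ∀ j : Fin (ℓ+1), ∃ i', Good.pop i' ∈ π (Agent.wag v j) := by
        intro j
        have hge := hgef (Agent.wag v j) (Agent.vert v) (adjVW v j).symm
        have h1 : 1 ≤ ∑ g ∈ π (Agent.vert v), val n m k ℓ (Agent.wag v j) g :=
          bundle_ge_of_pop _ _ i hmem
        exact exists_pop_of_pos _ (wag_zero v j) (le_trans h1 hge)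
      have hc := pigeon (fun j : Fin (ℓ+1) => Agent.wag v j)
        (fun a b h => by simpa using h) hw
      simp at hc
    | wag v j =>
      exfalso
      have hw : ∀ j' : Fin (ℓ+1), ∃ i', Good.pop i' ∈ π (Agent.wag v j') := by
        intro j'
        by_cases hjj : j = j'
        · exact ⟨i, hjj ▸ hmem⟩
        · have hge := hgef (Agent.wag v j') (Agent.wag v j) (adjWW v j j' hjj).symm
          have h1 : 1 ≤ ∑ g ∈ π (Agent.wag v j), val n m k ℓ (Agent.wag v j') g :=
            bundle_ge_of_pop _ _ i hmem
          exact exists_pop_of_pos _ (wag_zero v j') (le_trans h1 hge)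
      have hc := pigeon (fun j : Fin (ℓ+1) => Agent.wag v j)
        (fun a b h => by simpa using h) hw
      simp at hc
    | sag j₀ =>
      exfalso
      have hw : ∀ o : Option (Fin m),
          ∃ i', Good.pop i' ∈ π (Option.elim o (Agent.sag j₀) Agent.edg) := by
        intro o
        cases o with
        | none => exact ⟨i, hmem⟩
        | some t =>
          have hge := hgef (Agent.edg t) (Agent.sag j₀) (adjES t j₀)
          have h1 : 1 ≤ ∑ g ∈ π (Agent.sag j₀), val n m k ℓ (Agent.edg t) g :=
            bundle_ge_of_pop _ _ i hmem
          exact exists_pop_of_pos _ (edg_zero t) (le_trans h1 hge)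
      have hc := pigeon (fun o : Option (Fin m) => Option.elim o (Agent.sag j₀) Agent.edg)
        (by
          intro a b h
          cases a <;> cases b <;> simp only [Option.elim] at h
          · rfl
          · cases h
          · cases h
          · injection h with h'
            rw [h']) hw
      simp at hc
      omega
  · -- each edge agent holds at most one popular good
    intro t i i' h1 h2
    by_contra hne
    -- every s_j holds its dummy good
    have hdum : ∀ j : Fin (ℓ+1), Good.dum j ∈ π (Agent.sag j) := by
      intro j
      obtain ⟨a, ha⟩ := hcomplete (Good.dum j)
      have hv := hnonwasteful a _ ha
      cases a with
      | vert v => simp [val] at hv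
      | edg t' => simp [val] at hv
      | wag v j' => simp [val] at hv
      | sag j' =>
        have : j' = j := by by_contra hj; simp [val, hj] at hv
        exact this ▸ ha
    -- value of edge agent's bundle to each s_j is at least 2
    have h2le : ∀ j : Fin (ℓ+1),
        2 ≤ ∑ g ∈ π (Agent.edg t), val n m k ℓ (Agent.sag j) g := by
      intro j
      have hpne : (Good.pop i : Good k ℓ) ≠ Good.pop i' := by simp [hne]
      have hsub : ({Good.pop i, Good.pop i'} : Finset (Good k ℓ)) ⊆ π (Agent.edg t) := by
        intro g hg
        simp only [Finset.mem_insert, Finset.mem_singleton] at hg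
        rcases hg with rfl | rfl <;> assumption
      calc 2 = ∑ g ∈ ({Good.pop i, Good.pop i'} : Finset (Good k ℓ)),
                val n m k ℓ (Agent.sag j) g := by
              rw [Finset.sum_pair hpne, val_pop, val_pop]
        _ ≤ _ := Finset.sum_le_sum_of_subset hsub
    -- hence each s_j holds a popular good
    have hsag_pop : ∀ j : Fin (ℓ+1), ∃ a, Good.pop a ∈ π (Agent.sag j) := by
      intro j
      by_contra h
      push_neg at h
      have hsub : π (Agent.sag j) ⊆ {Good.dum j} := by
        intro g hg
        have hv := hnonwasteful _ g hg
        cases g with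
        | pop a => exact absurd hg (h a)
        | spec a => simp [val] at hv
        | dum j' =>
          have : j = j' := by by_contra hj; simp [val, hj] at hv
          simp [this]
      have hle : ∑ g ∈ π (Agent.sag j), val n m k ℓ (Agent.sag j) g ≤ 1 := by
        calc ∑ g ∈ π (Agent.sag j), val n m k ℓ (Agent.sag j) g
            ≤ ∑ g ∈ ({Good.dum j} : Finset (Good k ℓ)), val n m k ℓ (Agent.sag j) g :=
              Finset.sum_le_sum_of_subset hsub
          _ = 1 := by simp [val]
      have hge := hgef (Agent.sag j) (Agent.edg t) (adjES t j).symm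
      have := le_trans (h2le j) hge
      omega
    have hc := pigeon (fun j : Fin (ℓ+1) => Agent.sag j)
      (fun a b h => by simpa using h) hsag_pop
    simp at hc

end CliqueGoodsReduction
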